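/- arXiv:1502.02858 — 2 statements merged into one kernel-verified Lean document; each statement's English description precedes it below -/
import Mathlib

section
/- Let γ, ε be real constants with γ ≠ 1, γ ≠ 2, and 7γ ≠ 4ε + 6, let z₁ ≠ 0, ρ₀ ≠ 0, and set α = 1 − (1 − z₂/z₁)·(7γ − 4ε − 6)/(γ − 2). Define ρ(z) = ρ₀·(1 − z/z₁)^{(γ−4ε)/(7γ−4ε−6)} · (1 − z/(αz₁))^{(−6γ² + 4γ + 8ε)/((2−γ)(7γ−4ε−6))} on an open interval around 0 where 1 − z/z₁ > 0 and 1 − z/(αz₁) > 0 (assuming α ≠ 0). Then ρ is differentiable and satisfies (γ−1)·ρ'(z) = −(((z−z₁)γ + (z₂−z₁)(4ε−γ)) / ((z−z₁)(2−γ) + (z₂−z₁)(7γ−4ε−6))) · (γ−1)·ρ(z)/(z−z₁) on that interval, provided the denominator (z−z₁)(2−γ) + (z₂−z₁)(7γ−4ε−6) is nonzero there. -/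
/-! Writing `ρ = ρ₀ u^p v^q` with `u = 1 - z/z₁`, `v = 1 - z/(α z₁)`, the logarithmic derivative
is `ρ'/ρ = p/(z - z₁) + q/(z - α z₁)`. The definition of `α` says exactly that
`(z - α z₁)(2 - γ)` is the denominator of the equilibrium ODE, and with it the two partial
fractions recombine into the right-hand side of the ODE. -/

lemma sub_ne_zero_of_one_sub_div_pos {c z : ℝ} (hc : c ≠ 0) (hz : 0 < 1 - z / c) :
    z - c ≠ 0 := by
  rintro h
  rw [sub_eq_zero.mp h, div_self hc, sub_self] at hz
  exact hz.false

lemma hasDerivAt_one_sub_div_rpow {c p z : ℝ} (hc : c ≠ 0) (hz : 0 < 1 - z / c) :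
    HasDerivAt (fun x => (1 - x / c) ^ p) (p / (z - c) * (1 - z / c) ^ p) z := by
  have hu : HasDerivAt (fun x : ℝ => 1 - x / c) (-(1 / c)) z := by
    simpa using ((hasDerivAt_id z).div_const c).const_sub 1
  convert hu.rpow_const (p := p) (Or.inl hz.ne') using 1
  have hzc := sub_ne_zero_of_one_sub_div_pos hc hz
  have hu_eq : 1 - z / c = -(z - c) / c := by field_simp; ring
  rw [Real.rpow_sub hz, Real.rpow_one, hu_eq]
  field_simp

lemma hasDerivAt_mul_one_sub_div_rpow_mul_one_sub_div_rpow {K c d p q z : ℝ}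
    (hc : c ≠ 0) (hd : d ≠ 0) (hzc : 0 < 1 - z / c) (hzd : 0 < 1 - z / d) :
    HasDerivAt (fun x => K * (1 - x / c) ^ p * (1 - x / d) ^ q)
      ((p / (z - c) + q / (z - d)) * (K * (1 - z / c) ^ p * (1 - z / d) ^ q)) z := by
  refine (((hasDerivAt_one_sub_div_rpow (p := p) hc hzc).const_mul K).mul
    (hasDerivAt_one_sub_div_rpow (p := q) hd hzd)).congr_deriv ?_
  ring

lemma sub_mul_two_sub_eq {γ ε z z₁ z₂ α : ℝ} (hz₁ : z₁ ≠ 0) (hγ2 : γ ≠ 2)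
    (hαdef : α = 1 - (1 - z₂ / z₁) * (7 * γ - 4 * ε - 6) / (γ - 2)) :
    (z - α * z₁) * (2 - γ) = (z - z₁) * (2 - γ) + (z₂ - z₁) * (7 * γ - 4 * ε - 6) := by
  have hγ2' : γ - 2 ≠ 0 := sub_ne_zero.mpr hγ2
  subst hαdef
  field_simp
  ring

/-- Partial-fraction identity behind the ODE: `y` stands for `z - α z₁`. -/
lemma exponent_div_add_exponent_div {γ ε z z₁ z₂ y : ℝ} (hγ2 : γ ≠ 2)
    (hγε : 7 * γ ≠ 4 * ε + 6) (hzz₁ : z - z₁ ≠ 0)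
    (hB : (z - z₁) * (2 - γ) + (z₂ - z₁) * (7 * γ - 4 * ε - 6) ≠ 0)
    (hy : y * (2 - γ) = (z - z₁) * (2 - γ) + (z₂ - z₁) * (7 * γ - 4 * ε - 6)) :
    (γ - 4 * ε) / (7 * γ - 4 * ε - 6) / (z - z₁) +
        (-6 * γ ^ 2 + 4 * γ + 8 * ε) / ((2 - γ) * (7 * γ - 4 * ε - 6)) / y =
      -(((z - z₁) * γ + (z₂ - z₁) * (4 * ε - γ)) /
        ((z - z₁) * (2 - γ) + (z₂ - z₁) * (7 * γ - 4 * ε - 6))) / (z - z₁) := by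
  have hD : 7 * γ - 4 * ε - 6 ≠ 0 := fun h => hγε (by linarith)
  have h2γ : 2 - γ ≠ 0 := fun h => hγ2 (by linarith)
  have hy0 : y ≠ 0 := by
    rintro rfl
    exact hB (by linarith)
  rw [← hy, div_div, div_div,
    div_add_div _ _ (mul_ne_zero hD hzz₁) (mul_ne_zero (mul_ne_zero h2γ hD) hy0), neg_div,
    div_div, ← neg_div, div_eq_div_iff (by simp [*]) (by simp [*])]
  linear_combination (7 * γ - 4 * ε - 6) * y * (2 - γ) * (z - z₁) * (γ - 4 * ε) * hy

theorem stmt_6_general (γ ε z₁ z₂ ρ₀ α a b : ℝ)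
    (hγ2 : γ ≠ 2) (hγε : 7 * γ ≠ 4 * ε + 6)
    (hz₁ : z₁ ≠ 0) (hα : α ≠ 0)
    (hαdef : α = 1 - (1 - z₂ / z₁) * (7 * γ - 4 * ε - 6) / (γ - 2))
    (hpos1 : ∀ z ∈ Set.Ioo a b, 1 - z / z₁ > 0)
    (hpos2 : ∀ z ∈ Set.Ioo a b, 1 - z / (α * z₁) > 0)
    (ρ : ℝ → ℝ)
    (hρ : ∀ z, ρ z = ρ₀ * (1 - z / z₁) ^ ((γ - 4 * ε) / (7 * γ - 4 * ε - 6)) *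
      (1 - z / (α * z₁)) ^
        ((-6 * γ ^ 2 + 4 * γ + 8 * ε) / ((2 - γ) * (7 * γ - 4 * ε - 6)))) :
    ∀ z ∈ Set.Ioo a b,
      (z - z₁) * (2 - γ) + (z₂ - z₁) * (7 * γ - 4 * ε - 6) ≠ 0 →
      DifferentiableAt ℝ ρ z ∧
      (γ - 1) * deriv ρ z =
        -(((z - z₁) * γ + (z₂ - z₁) * (4 * ε - γ)) /
          ((z - z₁) * (2 - γ) + (z₂ - z₁) * (7 * γ - 4 * ε - 6))) *
          ((γ - 1) * ρ z / (z - z₁)) := by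
  intro z hz hB
  have hzz₁ := sub_ne_zero_of_one_sub_div_pos hz₁ (hpos1 z hz)
  have hder := hasDerivAt_mul_one_sub_div_rpow_mul_one_sub_div_rpow (K := ρ₀)
    (p := (γ - 4 * ε) / (7 * γ - 4 * ε - 6))
    (q := (-6 * γ ^ 2 + 4 * γ + 8 * ε) / ((2 - γ) * (7 * γ - 4 * ε - 6)))
    hz₁ (mul_ne_zero hα hz₁) (hpos1 z hz) (hpos2 z hz)
  rw [← funext hρ, ← hρ z] at hder
  refine ⟨hder.differentiableAt, ?_⟩
  rw [hder.deriv, exponent_div_add_exponent_div hγ2 hγε hzz₁ hB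
    (sub_mul_two_sub_eq hz₁ hγ2 hαdef)]
  ring

/-- The explicit power-law density eq. (22) solves the self-gravitating hydrostatic
equilibrium ODE eq. (21) for constant γ, ε. -/
theorem stmt_6 (γ ε z₁ z₂ ρ₀ α a b : ℝ)
    (hγ1 : γ ≠ 1) (hγ2 : γ ≠ 2) (hγε : 7 * γ ≠ 4 * ε + 6)
    (hz₁ : z₁ ≠ 0) (hρ₀ : ρ₀ ≠ 0) (hα : α ≠ 0)
    (hαdef : α = 1 - (1 - z₂ / z₁) * (7 * γ - 4 * ε - 6) / (γ - 2))
    (hI : (0:ℝ) ∈ Set.Ioo a b)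
    (hpos1 : ∀ z ∈ Set.Ioo a b, 1 - z / z₁ > 0)
    (hpos2 : ∀ z ∈ Set.Ioo a b, 1 - z / (α * z₁) > 0)
    (ρ : ℝ → ℝ)
    (hρ : ∀ z, ρ z = ρ₀ * (1 - z / z₁) ^ ((γ - 4 * ε) / (7 * γ - 4 * ε - 6)) *
      (1 - z / (α * z₁)) ^
        ((-6 * γ ^ 2 + 4 * γ + 8 * ε) / ((2 - γ) * (7 * γ - 4 * ε - 6)))) :
    ∀ z ∈ Set.Ioo a b,
      (z - z₁) * (2 - γ) + (z₂ - z₁) * (7 * γ - 4 * ε - 6) ≠ 0 →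
      DifferentiableAt ℝ ρ z ∧
      (γ - 1) * deriv ρ z =
        -(((z - z₁) * γ + (z₂ - z₁) * (4 * ε - γ)) /
          ((z - z₁) * (2 - γ) + (z₂ - z₁) * (7 * γ - 4 * ε - 6))) *
          ((γ - 1) * ρ z / (z - z₁)) :=
  stmt_6_general γ ε z₁ z₂ ρ₀ α a b hγ2 hγε hz₁ hα hαdef hpos1 hpos2 ρ hρ
end

section
/- Let γ, ε be constants with γ ≠ 1, 2 − γ ≠ 0, 7γ − 4ε − 6 ≠ 0, and let z₁, z₂ be constants with z₁ ≠ 0. Suppose ρ : I → ℝ is positive and differentiable on an open interval I around 0 and satisfies the logarithmic-derivative equation ρ'/ρ = −(1/(z−z₁)) · ((z−z₁)γ + (z₂−z₁)(4ε−γ)) / ((z−z₁)(2−γ) + (z₂−z₁)(7γ−4ε−6)), with denominators nonvanishing on I. Then ρ(z) = ρ(0)·(1 − z/z₁)^{(γ−4ε)/(7γ−4ε−6)}·(1 − z/(αz₁))^{(−6γ²+4γ+8ε)/((2−γ)(7γ−4ε−6))} on I, where α = 1 − (1 − z₂/z₁)(7γ−4ε−6)/(γ−2), provided 1 − z/z₁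 > 0 and 1 − z/(αz₁) > 0 on I. -/
/-!
The denominator of eq. (21) factors as `(2 - γ) (z - α z₁)`, so its right-hand side splits into
partial fractions `p / (z - z₁) + q / (z - α z₁)`, which is the logarithmic derivative of the power
law `(1 - z / z₁) ^ p (1 - z / (α z₁)) ^ q`. Two nonvanishing functions with the same logarithmic
derivative on an interval are proportional, and the constant is read off at `z = 0`.
-/

open Set

theorem logDeriv_one_sub_div_rpow {c p z : ℝ} (hc : c ≠ 0) (hz : 0 < 1 - z / c) :
    logDeriv (fun x => (1 - x / c) ^ p) z = p / (z - c) := by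
  have hbase : HasDerivAt (fun x => 1 - x / c) (-(1 / c)) z := by
    simpa using ((hasDerivAt_id z).div_const c).const_sub 1
  have hcz : c - z ≠ 0 := by
    rintro h
    rw [← sub_eq_zero.1 h, div_self hc, sub_self] at hz
    exact lt_irrefl 0 hz
  have hzc : z - c ≠ 0 := sub_ne_zero.2 (sub_ne_zero.1 hcz).symm
  have hw : (1 - z / c) ^ p ≠ 0 := (Real.rpow_pos_of_pos hz p).ne'
  rw [logDeriv_apply, (hbase.rpow_const (Or.inl hz.ne')).deriv, Real.rpow_sub_one hz.ne']
  generalize (1 - z / c) ^ p = w at hw ⊢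
  field_simp
  ring

theorem differentiableAt_one_sub_div_rpow {c p z : ℝ} (hz : 0 < 1 - z / c) :
    DifferentiableAt ℝ (fun x => (1 - x / c) ^ p) z :=
  DifferentiableAt.rpow_const (by fun_prop) (Or.inl hz.ne')

theorem logDeriv_one_sub_div_rpow_mul {c₁ c₂ p q z : ℝ} (hc₁ : c₁ ≠ 0) (hc₂ : c₂ ≠ 0)
    (h₁ : 0 < 1 - z / c₁) (h₂ : 0 < 1 - z / c₂) :
    logDeriv (fun x => (1 - x / c₁) ^ p * (1 - x / c₂) ^ q) z =
      p / (z - c₁) + q / (z - c₂) := by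
  rw [logDeriv_mul (f := fun x => (1 - x / c₁) ^ p) (g := fun x => (1 - x / c₂) ^ q) z
    (Real.rpow_pos_of_pos h₁ p).ne' (Real.rpow_pos_of_pos h₂ q).ne'
    (differentiableAt_one_sub_div_rpow h₁) (differentiableAt_one_sub_div_rpow h₂),
    logDeriv_one_sub_div_rpow hc₁ h₁, logDeriv_one_sub_div_rpow hc₂ h₂]

noncomputable def hydrostaticLogDeriv (γ ε z₁ z₂ z : ℝ) : ℝ :=
  -(1 / (z - z₁)) * (((z - z₁) * γ + (z₂ - z₁) * (4 * ε - γ)) /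
        ((z - z₁) * (2 - γ) + (z₂ - z₁) * (7 * γ - 4 * ε - 6)))

theorem hydrostatic_denominator_eq_mul {γ ε z₁ z₂ α z : ℝ} (hγ : 2 - γ ≠ 0) (hz₁ : z₁ ≠ 0)
    (hα : α = 1 - (1 - z₂ / z₁) * (7 * γ - 4 * ε - 6) / (γ - 2)) :
    (z - z₁) * (2 - γ) + (z₂ - z₁) * (7 * γ - 4 * ε - 6) = (2 - γ) * (z - α * z₁) := by
  have : γ - 2 ≠ 0 := fun h => hγ (by linarith)
  subst hα
  field_simp
  ring

theorem hydrostaticLogDeriv_eq {γ ε z₁ z₂ α z : ℝ} (hγ : 2 - γ ≠ 0)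
    (hγε : 7 * γ - 4 * ε - 6 ≠ 0) (hz₁ : z₁ ≠ 0)
    (hα : α = 1 - (1 - z₂ / z₁) * (7 * γ - 4 * ε - 6) / (γ - 2))
    (h₁ : z - z₁ ≠ 0) (h₂ : z - α * z₁ ≠ 0) :
    hydrostaticLogDeriv γ ε z₁ z₂ z =
      (γ - 4 * ε) / (7 * γ - 4 * ε - 6) / (z - z₁) +
        (-6 * γ ^ 2 + 4 * γ + 8 * ε) / ((2 - γ) * (7 * γ - 4 * ε - 6)) / (z - α * z₁) := by
  have hz₂ : z₂ - z₁ = (γ - 2) * (α * z₁ - z₁) / (7 * γ - 4 * ε - 6) := by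
    have : γ - 2 ≠ 0 := fun h => hγ (by linarith)
    rw [hα, eq_div_iff hγε]
    field_simp
    ring
  have hγε' : γ * 7 - 4 * ε - 6 ≠ 0 := by contrapose! hγε; linarith
  have h₂' : z - z₁ * α ≠ 0 := by rwa [mul_comm]
  rw [hydrostaticLogDeriv, hydrostatic_denominator_eq_mul hγ hz₁ hα, hz₂]
  field_simp
  ring

theorem stmt_15_general (γ ε z₁ z₂ a b : ℝ)
    (hγ2 : 2 - γ ≠ 0) (hγε : 7 * γ - 4 * ε - 6 ≠ 0) (hz₁ : z₁ ≠ 0)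
    (α : ℝ) (hα : α = 1 - (1 - z₂ / z₁) * (7 * γ - 4 * ε - 6) / (γ - 2))
    (hI : (0:ℝ) ∈ Set.Ioo a b)
    (ρ : ℝ → ℝ) (hρpos : ∀ z ∈ Set.Ioo a b, 0 < ρ z)
    (hρdiff : DifferentiableOn ℝ ρ (Set.Ioo a b))
    (hden : ∀ z ∈ Set.Ioo a b,
      (z - z₁) * (2 - γ) + (z₂ - z₁) * (7 * γ - 4 * ε - 6) ≠ 0)
    (hpos1 : ∀ z ∈ Set.Ioo a b, 1 - z / z₁ > 0)
    (hpos2 : ∀ z ∈ Set.Ioo a b, 1 - z / (α * z₁) > 0)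
    (hode : ∀ z ∈ Set.Ioo a b, deriv ρ z / ρ z =
      -(1 / (z - z₁)) * (((z - z₁) * γ + (z₂ - z₁) * (4 * ε - γ)) /
        ((z - z₁) * (2 - γ) + (z₂ - z₁) * (7 * γ - 4 * ε - 6)))) :
    ∀ z ∈ Set.Ioo a b, ρ z =
      ρ 0 * (1 - z / z₁) ^ ((γ - 4 * ε) / (7 * γ - 4 * ε - 6)) *
        (1 - z / (α * z₁)) ^
          ((-6 * γ ^ 2 + 4 * γ + 8 * ε) / ((2 - γ) * (7 * γ - 4 * ε - 6))) := by
  set g : ℝ → ℝ := fun z => (1 - z / z₁) ^ ((γ - 4 * ε) / (7 * γ - 4 * ε - 6)) *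
    (1 - z / (α * z₁)) ^ ((-6 * γ ^ 2 + 4 * γ + 8 * ε) / ((2 - γ) * (7 * γ - 4 * ε - 6)))
  have hz_ne_αz₁ : ∀ z ∈ Ioo a b, z - α * z₁ ≠ 0 := fun z hz =>
    right_ne_zero_of_mul (hydrostatic_denominator_eq_mul hγ2 hz₁ hα ▸ hden z hz)
  have hc : α * z₁ ≠ 0 := by simpa using hz_ne_αz₁ 0 hI
  have hg_pos : ∀ z ∈ Ioo a b, 0 < g z := fun z hz =>
    mul_pos (Real.rpow_pos_of_pos (hpos1 z hz) _) (Real.rpow_pos_of_pos (hpos2 z hz) _)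
  have hg_diff : DifferentiableOn ℝ g (Ioo a b) := fun z hz =>
    ((differentiableAt_one_sub_div_rpow (hpos1 z hz)).mul
      (differentiableAt_one_sub_div_rpow (hpos2 z hz))).differentiableWithinAt
  have hlog : EqOn (logDeriv ρ) (logDeriv g) (Ioo a b) := fun z hz => by
    have hzz₁ : z - z₁ ≠ 0 := sub_ne_zero.2 fun h => by simpa [h, hz₁] using hpos1 z hz
    rw [logDeriv_one_sub_div_rpow_mul hz₁ hc (hpos1 z hz) (hpos2 z hz), logDeriv_apply, hode z hz]
    exact hydrostaticLogDeriv_eq hγ2 hγε hz₁ hα hzz₁ (hz_ne_αz₁ z hz)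
  obtain ⟨k, -, hk⟩ := (logDeriv_eqOn_iff hρdiff hg_diff isOpen_Ioo isPreconnected_Ioo
    (fun z hz => (hg_pos z hz).ne') (fun z hz => (hρpos z hz).ne')).1 hlog
  have hk0 : ρ 0 = k := by simpa [g] using hk hI
  intro z hz
  rw [hk hz, hk0, Pi.smul_apply, smul_eq_mul, mul_assoc]

/-- Uniqueness direction of the integration of eq. (21): a positive solution of the
logarithmic-derivative ODE must be the power-law eq. (22). -/
theorem stmt_15 (γ ε z₁ z₂ a b : ℝ)
    (hγ1 : γ ≠ 1) (hγ2 : 2 - γ ≠ 0) (hγε : 7 * γ - 4 * ε - 6 ≠ 0) (hz₁ : z₁ ≠ 0)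
    (α : ℝ) (hα : α = 1 - (1 - z₂ / z₁) * (7 * γ - 4 * ε - 6) / (γ - 2))
    (hI : (0:ℝ) ∈ Set.Ioo a b)
    (ρ : ℝ → ℝ) (hρpos : ∀ z ∈ Set.Ioo a b, 0 < ρ z)
    (hρdiff : DifferentiableOn ℝ ρ (Set.Ioo a b))
    (hden : ∀ z ∈ Set.Ioo a b,
      (z - z₁) * (2 - γ) + (z₂ - z₁) * (7 * γ - 4 * ε - 6) ≠ 0)
    (hzz₁ : ∀ z ∈ Set.Ioo a b, z ≠ z₁)
    (hpos1 : ∀ z ∈ Set.Ioo a b, 1 - z / z₁ > 0)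
    (hpos2 : ∀ z ∈ Set.Ioo a b, 1 - z / (α * z₁) > 0)
    (hode : ∀ z ∈ Set.Ioo a b, deriv ρ z / ρ z =
      -(1 / (z - z₁)) * (((z - z₁) * γ + (z₂ - z₁) * (4 * ε - γ)) /
        ((z - z₁) * (2 - γ) + (z₂ - z₁) * (7 * γ - 4 * ε - 6)))) :
    ∀ z ∈ Set.Ioo a b, ρ z =
      ρ 0 * (1 - z / z₁) ^ ((γ - 4 * ε) / (7 * γ - 4 * ε - 6)) *
        (1 - z / (α * z₁)) ^
          ((-6 * γ ^ 2 + 4 * γ + 8 * ε) / ((2 - γ) * (7 * γ - 4 * ε - 6))) :=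
  stmt_15_general γ ε z₁ z₂ a b hγ2 hγε hz₁ α hα hI ρ hρpos hρdiff hden hpos1 hpos2 hode
end
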